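/- arXiv:math/0510294 — 4 statements merged into one kernel-verified Lean document; each statement's English description precedes it below -/
import Mathlib

section
/- Every finitely generated infinite group has a just-infinite quotient, i.e., admits a surjective homomorphism onto an infinite group all of whose proper quotients are finite. -/
/-- A group is just-infinite if it is infinite and every nontrivial normal
subgroup has finite index. -/
def JustInfinite (G : Type) [Group G] : Prop :=
  Infinite G ∧ ∀ N : Subgroup G, N.Normal → N ≠ ⊥ → N.FiniteIndex

/-- Every finitely generated infinite group has a just-infinite quotient. -/
theorem exists_just_infinite_quotient (G : Type) [Group G] [Group.FG G] [Infinite G] :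
    ∃ (J : Type) (_ : Group J), JustInfinite J ∧ ∃ f : G →* J, Function.Surjective f := by
  classical
  set S : Set (Subgroup G) := {N | N.Normal ∧ Infinite (G ⧸ N)} with hS
  have hbot : (⊥ : Subgroup G) ∈ S := by
    refine ⟨inferInstance, ?_⟩
    exact (QuotientGroup.quotientBot (G := G)).toEquiv.infinite_iff.2 ‹_›
  have hchainbd : ∀ c ⊆ S, IsChain (· ≤ ·) c → ∀ y ∈ c, ∃ ub ∈ S, ∀ z ∈ c, z ≤ ub := by
    intro c hcS hchain y hy
    refine ⟨sSup c, ⟨?_, ?_⟩, fun z hz => le_sSup hz⟩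
    · -- normality of sSup c
      constructor
      intro n hn g
      obtain ⟨K, hKc, hnK⟩ :=
        (Subgroup.mem_sSup_of_directedOn ⟨y, hy⟩ hchain.directedOn).1 hn
      haveI : K.Normal := (hcS hKc).1
      exact (le_sSup hKc : K ≤ sSup c) (Subgroup.Normal.conj_mem ‹K.Normal› n hnK g)
    · -- infinite quotient
      by_contra hfin
      haveI : Finite (G ⧸ sSup c) := Finite.of_not_infinite hfin
      haveI : (sSup c).FiniteIndex := Subgroup.finiteIndex_of_finite_quotient
      haveI : Group.FG ↥(sSup c) := Subgroup.fg_of_index_ne_zero (H := sSup c)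
      obtain ⟨T, hT⟩ := (Group.fg_iff_subgroup_fg (sSup c)).1 ‹_›
      have hTsub : (T : Set G) ⊆ ⋃ K ∈ c, (K : Set G) := by
        intro t ht
        have : t ∈ sSup c := hT ▸ Subgroup.subset_closure ht
        obtain ⟨K, hKc, htK⟩ :=
          (Subgroup.mem_sSup_of_directedOn ⟨y, hy⟩ hchain.directedOn).1 this
        exact Set.mem_biUnion hKc htK
      have hdir : DirectedOn (fun i j : Subgroup G => (i : Set G) ⊆ (j : Set G)) c := by
        intro a ha b hb
        obtain ⟨k, hk, hak, hbk⟩ := hchain.directedOn a ha b hb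
        exact ⟨k, hk, hak, hbk⟩
      obtain ⟨K, hKc, hTK⟩ :=
        hdir.exists_mem_subset_of_finset_subset_biUnion ⟨y, hy⟩ hTsub
      have hsSupK : sSup c ≤ K := by
        rw [← hT]
        exact Subgroup.closure_le K |>.2 hTK
      have hKsSup : K ≤ sSup c := le_sSup hKc
      have heq : sSup c = K := le_antisymm hsSupK hKsSup
      haveI : Infinite (G ⧸ K) := (hcS hKc).2
      rw [heq] at hfin
      exact hfin ‹_›
  obtain ⟨N, -, hNmax⟩ := zorn_le_nonempty₀ S hchainbd ⊥ hbot
  · have hNS : N ∈ S := hNmax.prop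
    haveI hNnormal : N.Normal := hNS.1
    haveI hNinf : Infinite (G ⧸ N) := hNS.2
    refine ⟨G ⧸ N, inferInstance, ⟨hNinf, ?_⟩, QuotientGroup.mk' N,
      QuotientGroup.mk'_surjective N⟩
    intro M' hM'normal hM'ne
    set M : Subgroup G := M'.comap (QuotientGroup.mk' N) with hM
    haveI hMnormal : M.Normal := hM'normal.comap _
    have hNleM : N ≤ M := by
      intro x hx
      have : (QuotientGroup.mk' N) x = 1 := by
        rwa [← MonoidHom.mem_ker, QuotientGroup.ker_mk']
      show (QuotientGroup.mk' N) x ∈ M'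
      rw [this]; exact M'.one_mem
    have hNneM : N ≠ M := by
      intro h
      apply hM'ne
      have := Subgroup.map_comap_eq_self_of_surjective (QuotientGroup.mk'_surjective N) M'
      rw [← this, ← hM, ← h]
      ext x
      simp only [Subgroup.mem_map, Subgroup.mem_bot]
      constructor
      · rintro ⟨y, hy, rfl⟩
        simpa [QuotientGroup.eq_one_iff] using hy
      · rintro rfl
        exact ⟨1, N.one_mem, map_one _⟩
    have hMnotS : M ∉ S := by
      intro hMS
      exact hNneM (le_antisymm hNleM (hNmax.le_of_ge hMS hNleM))
    have hMfin : ¬ Infinite (G ⧸ M) := fun h => hMnotS ⟨hMnormal, h⟩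
    haveI : Finite (G ⧸ M) := Finite.of_not_infinite hMfin
    haveI : M.FiniteIndex := Subgroup.finiteIndex_of_finite_quotient
    have hidx : M.index = M'.index :=
      Subgroup.index_comap_of_surjective M' (QuotientGroup.mk'_surjective N)
    exact ⟨hidx ▸ (Subgroup.FiniteIndex.index_ne_zero : M.index ≠ 0)⟩
end

section
/- A just-infinite group with nontrivial center is isomorphic to the infinite cyclic group ℤ. -/
open scoped commutatorElement

lemma aux_comm_left {G : Type*} [Group G] (g k z : G) (hz : z ∈ Subgroup.center G) :
    ⁅g * z, k⁆ = ⁅g, k⁆ := by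
  have hz' : ∀ y : G, y * z = z * y := Subgroup.mem_center_iff.mp hz
  simp only [commutatorElement_def]
  calc (g * z) * k * (g * z)⁻¹ * k⁻¹ = g * (z * k * z⁻¹) * g⁻¹ * k⁻¹ := by group
    _ = g * k * g⁻¹ * k⁻¹ := by rw [← hz' k, mul_inv_cancel_right]

lemma aux_comm_right {G : Type*} [Group G] (g k w : G) (hw : w ∈ Subgroup.center G) :
    ⁅g, k * w⁆ = ⁅g, k⁆ := by
  have hw' : ∀ y : G, y * w = w * y := Subgroup.mem_center_iff.mp hw
  simp only [commutatorElement_def]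
  calc g * (k * w) * g⁻¹ * (k * w)⁻¹ = g * k * (w * g⁻¹ * w⁻¹) * k⁻¹ := by group
    _ = g * k * g⁻¹ * k⁻¹ := by rw [← hw' g⁻¹, mul_inv_cancel_right]

lemma aux_infCyclic {H : Type*} [Group H] [IsCyclic H] [Infinite H] :
    Nonempty (H ≃* Multiplicative ℤ) := by
  obtain ⟨g, hg⟩ := IsCyclic.exists_generator (α := H)
  have h0 : orderOf g = 0 := Infinite.orderOf_eq_zero_of_forall_mem_zpowers hg
  have hker : (zpowersHom H g).ker = ⊥ := by
    rw [zpowersHom_ker_eq, h0]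
    simp
  have hinj : Function.Injective (zpowersHom H g) :=
    (MonoidHom.ker_eq_bot_iff _).1 hker
  have hsurj : Function.Surjective (zpowersHom H g) := by
    intro x
    obtain ⟨k, hk⟩ := hg x
    exact ⟨Multiplicative.ofAdd k, hk⟩
  exact ⟨(MulEquiv.ofBijective _ ⟨hinj, hsurj⟩).symm⟩

/-- A just-infinite group with nontrivial center is isomorphic to the infinite
cyclic group ℤ. -/
theorem justInfinite_nontrivial_center_iso_int (G : Type) [Group G] (h : JustInfinite G)
    (hc : Subgroup.center G ≠ ⊥) : Nonempty (G ≃* Multiplicative ℤ) := by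
  classical
  obtain ⟨hInf, hJI⟩ := h
  haveI : Infinite G := hInf
  -- a finite nontrivial normal subgroup is impossible
  have hfin : ∀ N : Subgroup G, N.Normal → N ≠ ⊥ → ¬ Finite N := by
    intro N hN hne hF
    haveI := hJI N hN hne
    have hcard : N.index * Nat.card N = Nat.card G := N.index_mul_card
    have hG : Nat.card G ≠ 0 := by
      rw [← hcard]
      have hNfi : N.index ≠ 0 := (hJI N hN hne).index_ne_zero
      exact Nat.mul_ne_zero hNfi (Nat.card_ne_zero.mpr ⟨⟨1, N.one_mem⟩, hF⟩)
    haveI := Nat.finite_of_card_ne_zero hG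
    exact not_finite G
  -- center has finite index
  haveI hZfi : (Subgroup.center G).FiniteIndex := hJI _ inferInstance hc
  -- commutator set is finite
  haveI hCSfin : Finite (commutatorSet G) := by
    let Φ : (G ⧸ Subgroup.center G) × (G ⧸ Subgroup.center G) → commutatorSet G :=
      fun p => ⟨⁅p.1.out, p.2.out⁆, p.1.out, p.2.out, rfl⟩
    apply Finite.of_surjective Φ
    rintro ⟨x, g, k, rfl⟩
    refine ⟨(QuotientGroup.mk g, QuotientGroup.mk k), ?_⟩
    obtain ⟨z, hz⟩ := QuotientGroup.mk_out_eq_mul (Subgroup.center G) g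
    obtain ⟨w, hw⟩ := QuotientGroup.mk_out_eq_mul (Subgroup.center G) k
    apply Subtype.ext
    show ⁅(QuotientGroup.mk g : G ⧸ Subgroup.center G).out,
      (QuotientGroup.mk k : G ⧸ Subgroup.center G).out⁆ = ⁅g, k⁆
    rw [hz, hw, aux_comm_right (g * (z : G)) k w w.2, aux_comm_left g k z z.2]
  haveI hComFin : Finite (commutator G) := inferInstance
  -- hence the commutator subgroup is trivial, and G is commutative
  have hComBot : commutator G = ⊥ := by
    by_contra hne
    exact hfin (commutator G) inferInstance hne hComFin
  have hcomm : ∀ a b : G, a * b = b * a := by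
    intro a b
    have hmem : ⁅a, b⁆ ∈ commutator G :=
      Subgroup.commutator_mem_commutator (Subgroup.mem_top a) (Subgroup.mem_top b)
    rw [hComBot, Subgroup.mem_bot] at hmem
    exact (commutatorElement_eq_one_iff_commute.mp hmem).eq
  -- every subgroup is normal
  have hnormal : ∀ N : Subgroup G, N.Normal := by
    intro N
    refine ⟨fun n hn g => ?_⟩
    have : g * n * g⁻¹ = n := by rw [hcomm g n, mul_inv_cancel_right]
    rwa [this]
  -- G is torsion-free
  have htf : ∀ x : G, x ≠ 1 → ¬ IsOfFinOrder x := by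
    intro x hx hfo
    have hFin : Finite (Subgroup.zpowers x) :=
      (finite_zpowers.mpr hfo).to_subtype
    exact hfin _ (hnormal _) (fun hb => hx (Subgroup.zpowers_eq_bot.mp hb)) hFin
  -- pick a nontrivial element
  obtain ⟨g, hg⟩ := exists_ne (1 : G)
  set H := Subgroup.zpowers g with hH
  haveI hNorm : H.Normal := hnormal H
  haveI hFI : H.FiniteIndex :=
    hJI H hNorm (fun hb => hg (Subgroup.zpowers_eq_bot.mp hb))
  set n := H.index with hn'
  have hn : n ≠ 0 := hFI.index_ne_zero
  have hmem : ∀ x : G, x ^ n ∈ H := fun x => H.pow_index_mem x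
  have hgfo : ¬ IsOfFinOrder g := htf g hg
  have hzinj : Function.Injective fun k : ℤ => g ^ k :=
    injective_zpow_iff_not_isOfFinOrder.mpr hgfo
  -- define the embedding into ℤ
  have hmem' : ∀ x : G, ∃ k : ℤ, g ^ k = x ^ n := fun x =>
    Subgroup.mem_zpowers_iff.mp (hmem x)
  let ψ : G → ℤ := fun x => (hmem' x).choose
  have hψ : ∀ x : G, g ^ ψ x = x ^ n := fun x => (hmem' x).choose_spec
  have hψadd : ∀ x y : G, ψ (x * y) = ψ x + ψ y := by
    intro x y
    apply hzinj
    show g ^ ψ (x * y) = g ^ (ψ x + ψ y)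
    have hC : Commute x y := hcomm x y
    rw [hψ, zpow_add, hψ, hψ, hC.mul_pow]
  have hψone : ψ (1 : G) = 0 := by
    apply hzinj
    show g ^ ψ (1 : G) = g ^ (0 : ℤ)
    rw [hψ, one_pow, zpow_zero]
  let f : G →* Multiplicative ℤ :=
    { toFun := fun x => Multiplicative.ofAdd (ψ x)
      map_one' := by simp [hψone]
      map_mul' := fun x y => by simp [hψadd x y, ofAdd_add] }
  have finj : Function.Injective f := by
    intro x y hxy
    have hψeq : ψ x = ψ y := by
      simpa [f, Multiplicative.ofAdd] using hxy
    have hpow : x ^ n = y ^ n := by rw [← hψ x, ← hψ y, hψeq]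
    have hC0 : Commute x y := hcomm x y
    have hC : Commute x y⁻¹ := hC0.inv_right
    have h1 : (x * y⁻¹) ^ n = 1 := by
      rw [hC.mul_pow, inv_pow, hpow, mul_inv_cancel]
    by_contra hne
    have hne' : x * y⁻¹ ≠ 1 := fun hb => hne (mul_inv_eq_one.mp hb)
    exact htf _ hne' (isOfFinOrder_iff_pow_eq_one.mpr ⟨n, Nat.pos_of_ne_zero hn, h1⟩)
  -- transport cyclicity from ℤ
  let e : G ≃* f.range := MonoidHom.ofInjective finj
  haveI : IsCyclic f.range := Subgroup.isCyclic f.range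
  haveI : Infinite f.range := Infinite.of_injective e e.injective
  obtain ⟨e2⟩ := aux_infCyclic (H := f.range)
  exact ⟨e.trans e2⟩
end

section
/- Let G be a group generated as a monoid by a finite set S, and let H ≤ G be a subgroup of finite index L. Then for every n ∈ ℕ, the number of elements of G of S-word-length at most n is at most L times the number of elements of H of S-word-length at most n + L − 1. -/
/-!
Choose, for every coset `q` of `H`, a word `w q` over `S` of length at most `L - 1` with
`w q • q = H`: since `G ⧸ H` has `L` points, any word sending `q` to `H` can be shortened by
pigeonhole, cutting out the segment between two repeated intermediate cosets. Then
`g ↦ (gH, w (gH) * g)` is injective, and sends a ball of radius `n` in `G` into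
`(G ⧸ H) × (H ∩ ball of radius n + L - 1)`.
-/

/-- `lengthLE S g n` : the element `g` is a product of at most `n` elements of `S`,
i.e. its word length with respect to the monoid generating set `S` is at most `n`. -/
def lengthLE {G : Type} [Group G] (S : Set G) (g : G) (n : ℕ) : Prop :=
  ∃ l : List G, l.length ≤ n ∧ (∀ x ∈ l, x ∈ S) ∧ l.prod = g

section SmulWords

variable {M α : Type*} [Monoid M] [MulAction M α] [Finite α]

theorem exists_shorter_sublist_smul_eq (l : List M) (a : α) (hl : Nat.card α ≤ l.length) :
    ∃ l' : List M, l'.Sublist l ∧ l'.length < l.length ∧ l'.prod • a = l.prod • a := by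
  obtain ⟨i, j, hij, hne⟩ : ∃ i j : Fin (l.length + 1),
      (l.drop i).prod • a = (l.drop j).prod • a ∧ i ≠ j := by
    refine Function.not_injective_iff.mp fun hinj => ?_
    have := Nat.card_le_card_of_injective _ hinj
    rw [Nat.card_fin] at this
    omega
  wlog hlt : i < j generalizing i j
  · exact this j i hij.symm hne.symm (lt_of_le_of_ne (not_lt.mp hlt) hne.symm)
  refine ⟨l.take i ++ l.drop j, ?_, ?_, ?_⟩
  · simpa using (List.drop_sublist_drop_left l hlt.le).append_left (l.take i)
  · simp only [List.length_append, List.length_take, List.length_drop]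
    omega
  · rw [List.prod_append, mul_smul, ← hij, ← mul_smul, List.prod_take_mul_prod_drop]

theorem exists_sublist_length_lt_card_smul_eq (l : List M) (a : α) :
    ∃ l' : List M, l'.Sublist l ∧ l'.length < Nat.card α ∧ l'.prod • a = l.prod • a := by
  induction h : l.length using Nat.strong_induction_on generalizing l with
  | _ n ih =>
    by_cases hl : l.length < Nat.card α
    · exact ⟨l, List.Sublist.refl l, hl, rfl⟩
    obtain ⟨l₁, hsub₁, hlen₁, hprod₁⟩ := exists_shorter_sublist_smul_eq l a (not_lt.mp hl)
    obtain ⟨l₂, hsub₂, hlen₂, hprod₂⟩ := ih _ (h ▸ hlen₁) l₁ rfl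
    exact ⟨l₂, hsub₂.trans hsub₁, hlen₂, hprod₂.trans hprod₁⟩

end SmulWords

section WordLength

variable {G : Type} [Group G] {S : Set G}

theorem lengthLE.mono {g : G} {m n : ℕ} (hg : lengthLE S g m) (hmn : m ≤ n) :
    lengthLE S g n :=
  let ⟨l, hlen, hS, hprod⟩ := hg
  ⟨l, hlen.trans hmn, hS, hprod⟩

theorem lengthLE.mul {g h : G} {m n : ℕ} (hg : lengthLE S g m) (hh : lengthLE S h n) :
    lengthLE S (g * h) (m + n) := by
  obtain ⟨l₁, hlen₁, hS₁, rfl⟩ := hg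
  obtain ⟨l₂, hlen₂, hS₂, rfl⟩ := hh
  refine ⟨l₁ ++ l₂, ?_, ?_, List.prod_append⟩
  · rw [List.length_append]
    omega
  · simpa only [List.mem_append, or_imp, forall_and] using ⟨hS₁, hS₂⟩

theorem finite_setOf_lengthLE (hS : S.Finite) (n : ℕ) : {g : G | lengthLE S g n}.Finite := by
  have : Finite S := hS.to_subtype
  refine ((List.finite_length_le S n).image fun l => (l.map Subtype.val).prod).subset ?_
  rintro g ⟨l, hlen, hlS, rfl⟩
  exact ⟨l.pmap Subtype.mk hlS, by simpa using hlen, by simp [List.map_pmap]⟩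

theorem exists_lengthLE_smul_eq {α : Type*} [MulAction G α] [Finite α]
    (hgen : Submonoid.closure S = ⊤) (g : G) (a : α) :
    ∃ w, lengthLE S w (Nat.card α - 1) ∧ w • a = g • a := by
  obtain ⟨l, hlS, rfl⟩ := Submonoid.exists_list_of_mem_closure (hgen ▸ Submonoid.mem_top g)
  obtain ⟨l', hsub, hlen, hprod⟩ := exists_sublist_length_lt_card_smul_eq l a
  exact ⟨l'.prod, ⟨l', by omega, fun x hx => hlS x (hsub.subset hx), rfl⟩, hprod⟩

/-- `S` generates only as a monoid, so it is `w q`, not the representative `(w q)⁻¹` of `q`,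
whose length is bounded. -/
theorem exists_lengthLE_index_sub_one_mul_mem (hgen : Submonoid.closure S = ⊤)
    (H : Subgroup G) [H.FiniteIndex] :
    ∃ w : G ⧸ H → G, ∀ g : G, lengthLE S (w g) (H.index - 1) ∧ w g * g ∈ H := by
  have hword (q : G ⧸ H) :
      ∃ w, lengthLE S w (H.index - 1) ∧ w • q = ((1 : G) : G ⧸ H) := by
    obtain ⟨g, rfl⟩ := QuotientGroup.mk_surjective q
    simpa [H.index_eq_card] using exists_lengthLE_smul_eq hgen g⁻¹ (g : G ⧸ H)
  choose w hw_len hw_smul using hword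
  refine ⟨w, fun g => ⟨hw_len g, ?_⟩⟩
  have h := hw_smul g
  rw [MulAction.Quotient.smul_mk, smul_eq_mul, QuotientGroup.eq, mul_one] at h
  exact inv_mem_iff.mp h

end WordLength

/-- If `H` is a subgroup of finite index `L` in a group `G` generated as a monoid by a
finite set `S`, then the number of elements of `G` of length at most `n` is at most
`L` times the number of elements of `H` of length at most `n + L - 1`. -/
theorem growth_le_index_mul_subgroup_growth (G : Type) [Group G] (S : Set G)
    (hS : S.Finite) (hgen : Submonoid.closure S = ⊤)
    (H : Subgroup G) (hH : H.FiniteIndex) (n : ℕ) :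
    Set.ncard {g : G | lengthLE S g n} ≤
      H.index * Set.ncard {g : G | g ∈ H ∧ lengthLE S g (n + H.index - 1)} := by
  obtain ⟨w, hw⟩ := exists_lengthLE_index_sub_one_mul_mem hgen H
  set B := {g : G | g ∈ H ∧ lengthLE S g (n + H.index - 1)}
  have hB : B.Finite := (finite_setOf_lengthLE hS _).subset fun _ hg => hg.2
  have hmaps : ∀ g ∈ {g : G | lengthLE S g n},
      ((g : G ⧸ H), w g * g) ∈ (Set.univ : Set (G ⧸ H)) ×ˢ B := fun g hg =>
    ⟨trivial, (hw g).2, ((hw g).1.mul hg).mono (by have := hH.index_ne_zero; omega)⟩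
  have hinj : Set.InjOn (fun g : G => ((g : G ⧸ H), w g * g)) {g | lengthLE S g n} := by
    intro g _ g' _ hgg'
    obtain ⟨hq, hmul⟩ := Prod.mk.inj hgg'
    rw [hq] at hmul
    exact mul_left_cancel hmul
  calc Set.ncard {g : G | lengthLE S g n}
      ≤ ((Set.univ : Set (G ⧸ H)) ×ˢ B).ncard :=
        Set.ncard_le_ncard_of_injOn _ hmaps hinj (Set.finite_univ.prod hB)
    _ = H.index * B.ncard := by rw [Set.ncard_prod, Set.ncard_univ, H.index_eq_card]
end

section
/- Define polynomials Q_n ∈ ℤ[ħ] by Q_3 = ħ + ħ² + ħ³ and Q_n(ħ) = (1 + ħ)·Q_{n-1}(ħ²) + ħ + ħ² for n ≥ 4. Then for all n ≥ 3, Q_n has degree 2^{n-1} − 1, and for all n ≥ 4 the coefficients of Q_n and Q_{n+1} agree in all degrees strictly less than 2^{n-3} − 1 + 1 (i.e., the first 2^{n-3} − 1 coefficients after the constant term coincide); consequently the coefficient-wise limit Q_∞ = lim_{n→∞} Q_n exists as a formal power series. -/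
open Polynomial

private lemma natDegree_add_of_lt {p q : Polynomial ℤ} (h : q.natDegree < p.natDegree) :
    (p + q).natDegree = p.natDegree := by
  have := Polynomial.degree_add_eq_left_of_degree_lt (p := p) (q := q)
    (Polynomial.degree_lt_degree h)
  exact Polynomial.natDegree_eq_of_degree_eq this

/-- For the recursion `Q 3 = ħ + ħ² + ħ³`, `Q n (ħ) = (1 + ħ) Q (n-1) (ħ²) + ħ + ħ²`
(`n ≥ 4`): `Q n` has degree `2^{n-1} − 1`; for `n ≥ 4` the coefficients of `Q n` and
`Q (n+1)` agree in all degrees `< 2^{n-3} − 1 + 1`; hence the coefficient-wise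
limit `Q ∞` exists as a formal power series. -/
theorem grigorchuk_lie_poincare_series (Q : ℕ → Polynomial ℤ)
    (h3 : Q 3 = X + X ^ 2 + X ^ 3)
    (hrec : ∀ n, 4 ≤ n → Q n = (1 + X) * (Q (n - 1)).comp (X ^ 2) + X + X ^ 2) :
    (∀ n, 3 ≤ n → (Q n).natDegree = 2 ^ (n - 1) - 1) ∧
    (∀ n, 4 ≤ n → ∀ k, k < 2 ^ (n - 3) - 1 + 1 → (Q n).coeff k = (Q (n + 1)).coeff k) ∧
    ∃ Qinf : PowerSeries ℤ, ∀ k : ℕ, ∃ N : ℕ, ∀ n, N ≤ n →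
      (Q n).coeff k = PowerSeries.coeff k Qinf := by
  -- rewrite the recursion via expand
  have hrec' : ∀ n, 4 ≤ n →
      Q n = (1 + X) * (Polynomial.expand ℤ 2 (Q (n - 1))) + X + X ^ 2 := by
    intro n hn
    rw [hrec n hn, Polynomial.expand_eq_comp_X_pow]
  -- coefficient formula
  have hcoeff : ∀ n, 4 ≤ n → ∀ k,
      (Q n).coeff k =
        (Polynomial.expand ℤ 2 (Q (n - 1))).coeff k
        + (X * (Polynomial.expand ℤ 2 (Q (n - 1)))).coeff k
        + (X : Polynomial ℤ).coeff k + ((X : Polynomial ℤ) ^ 2).coeff k := by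
    intro n hn k
    rw [hrec' n hn]
    simp [add_mul, one_mul, coeff_add]
  -- degree statement
  have hdeg : ∀ n, 3 ≤ n → (Q n).natDegree = 2 ^ (n - 1) - 1 := by
    intro n hn
    induction n, hn using Nat.le_induction with
    | base =>
      rw [h3]
      compute_degree!
    | succ n hn ih =>
      have h4 : 4 ≤ n + 1 := by omega
      rw [hrec' (n + 1) h4]
      simp only [Nat.add_sub_cancel]
      have hpow : (2:ℕ) ^ 2 ≤ 2 ^ (n - 1) := Nat.pow_le_pow_right (by norm_num) (by omega)
      have hQne : Q n ≠ 0 := by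
        intro h
        rw [h, Polynomial.natDegree_zero] at ih
        omega
      have hexp : (Polynomial.expand ℤ 2 (Q n)).natDegree = (2 ^ (n - 1) - 1) * 2 := by
        rw [Polynomial.natDegree_expand, ih]
      have hexpne : Polynomial.expand ℤ 2 (Q n) ≠ 0 := by
        rw [Ne, Polynomial.expand_eq_zero (by norm_num)]
        exact hQne
      have h1X : ((1 : Polynomial ℤ) + X).natDegree = 1 := by
        compute_degree!
      have h1Xne : ((1 : Polynomial ℤ) + X) ≠ 0 := by
        intro h
        rw [h, Polynomial.natDegree_zero] at h1X
        exact one_ne_zero h1X.symm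
      have hmul : ((1 + X) * Polynomial.expand ℤ 2 (Q n)).natDegree
          = 1 + (2 ^ (n - 1) - 1) * 2 := by
        rw [Polynomial.natDegree_mul h1Xne hexpne, h1X, hexp]
      have hXd : ((X : Polynomial ℤ) + X ^ 2).natDegree ≤ 2 := by
        compute_degree
      rw [add_assoc]
      rw [natDegree_add_of_lt (by
        rw [hmul]
        exact lt_of_le_of_lt hXd (by omega)), hmul]
      have hn1 : (2:ℕ) ^ n = 2 ^ (n - 1) * 2 := by
        rw [← pow_succ]
        congr 1
        omega
      rw [hn1]
      omega
  -- constant coefficient is 0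
  have hc0 : ∀ n, 3 ≤ n → (Q n).coeff 0 = 0 := by
    intro n hn
    induction n, hn using Nat.le_induction with
    | base => simp [h3]
    | succ n hn ih =>
      rw [hcoeff (n + 1) (by omega) 0]
      simp only [Nat.add_sub_cancel]
      rw [Polynomial.coeff_expand (by norm_num)]
      simp [Polynomial.mul_coeff_zero, ih]
  -- stabilization
  have hstab : ∀ n, 4 ≤ n → ∀ k, k < 2 ^ (n - 3) → (Q n).coeff k = (Q (n + 1)).coeff k := by
    intro n hn
    induction n, hn using Nat.le_induction with
    | base =>
      intro k hk
      interval_cases k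
      · rw [hc0 4 (by omega), hc0 5 (by omega)]
      · rw [hcoeff 4 (by omega) 1, hcoeff 5 (by omega) 1]
        simp only [show (4:ℕ) - 1 = 3 from rfl, show (5:ℕ) - 1 = 4 from rfl]
        rw [Polynomial.coeff_expand (by norm_num), Polynomial.coeff_expand (by norm_num)]
        have e1 : ∀ p : Polynomial ℤ, (X * p).coeff 1 = p.coeff 0 :=
          fun p => Polynomial.coeff_X_mul p 0
        rw [e1, e1,
          Polynomial.coeff_expand (by norm_num), Polynomial.coeff_expand (by norm_num)]
        simp only [Nat.zero_div, if_pos (dvd_zero 2)]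
        rw [hc0 3 (by omega), hc0 4 (by omega)]
    | succ n hn ih =>
      intro k hk
      have hm : (2:ℕ) ^ (n + 1 - 3) = 2 ^ (n - 3) * 2 := by
        rw [← pow_succ]
        congr 1
        omega
      rw [hm] at hk
      have e1 : (Polynomial.expand ℤ 2 (Q n)).coeff k
          = (Polynomial.expand ℤ 2 (Q (n + 1))).coeff k := by
        rw [Polynomial.coeff_expand (by norm_num), Polynomial.coeff_expand (by norm_num)]
        split
        · apply ih
          rw [Nat.div_lt_iff_lt_mul (by norm_num)]
          omega
        · rfl
      have e2 : (X * Polynomial.expand ℤ 2 (Q n)).coeff k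
          = (X * Polynomial.expand ℤ 2 (Q (n + 1))).coeff k := by
        cases k with
        | zero => simp [Polynomial.mul_coeff_zero]
        | succ m =>
          rw [Polynomial.coeff_X_mul, Polynomial.coeff_X_mul,
            Polynomial.coeff_expand (by norm_num), Polynomial.coeff_expand (by norm_num)]
          split
          · apply ih
            rw [Nat.div_lt_iff_lt_mul (by norm_num)]
            omega
          · rfl
      rw [hcoeff (n + 1) (by omega) k, hcoeff (n + 2) (by omega) k]
      simp only [Nat.add_sub_cancel, show n + 2 - 1 = n + 1 from rfl]
      rw [e1, e2]
  refine ⟨hdeg, ?_, ?_⟩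
  · intro n hn k hk
    apply hstab n hn
    have : 1 ≤ 2 ^ (n - 3) := Nat.one_le_two_pow
    omega
  · have key : ∀ k n, k + 4 ≤ n → (Q n).coeff k = (Q (k + 4)).coeff k := by
      intro k n hn
      induction n, hn using Nat.le_induction with
      | base => rfl
      | succ n hn ih =>
        rw [← ih]
        symm
        apply hstab n (by omega)
        calc k < 2 ^ k := Nat.lt_two_pow_self
        _ ≤ 2 ^ (n - 3) := Nat.pow_le_pow_right (by norm_num) (by omega)
    refine ⟨PowerSeries.mk fun k => (Q (k + 4)).coeff k, fun k => ⟨k + 4, fun n hn => ?_⟩⟩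
    rw [PowerSeries.coeff_mk]
    exact key k n hn
end
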